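/- Let A and B be random variables with values in finite sets and let E be an event with Pr[E] > 0, all on a common probability space. Define the average min-entropy of A given B under the conditioning on E as H̃∞(A | B; E) := −log ( E_{b ∼ B|E}[ max_a Pr[A=a | B=b, E] ] ). Then Pr[E] · 2^{−H̃∞(A | B; E)} ≤ 2^{−H̃∞(A | B)}; equivalently, H̃∞(A | B; E) ≥ H̃∞(A | B) − log(1/Pr[E]). -/
import Mathlib


noncomputable section
open scoped Classical
open Finset

/-- Probability of an event under a probability mass function `p` on a finite sample space. -/
def prEvt {Ω : Type*} [Fintype Ω] (p : Ω → ℝ) (E : Set Ω) : ℝ :=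
  ∑ ω, if ω ∈ E then p ω else 0

/-- Conditional probability of `E` given `F`. -/
def cprEvt {Ω : Type*} [Fintype Ω] (p : Ω → ℝ) (E F : Set Ω) : ℝ :=
  prEvt p (E ∩ F) / prEvt p F

/-- Average min-entropy `H̃∞(A|B) = -log₂ (E_{b∼B}[max_a Pr[A=a|B=b]])`. -/
def avgMinEnt {Ω α β : Type*} [Fintype Ω] [Fintype α] [Nonempty α] [Fintype β]
    (p : Ω → ℝ) (A : Ω → α) (B : Ω → β) : ℝ :=
  - Real.logb 2 (∑ b : β, prEvt p {ω | B ω = b} * ⨆ a : α, cprEvt p {ω | A ω = a} {ω | B ω = b})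

/-- Average min-entropy of `A` given `B` under conditioning on an event `E`:
`H̃∞(A|B;E) = -log₂ (E_{b∼B|E}[max_a Pr[A=a | B=b, E]])`. -/
def avgMinEntOn {Ω α β : Type*} [Fintype Ω] [Fintype α] [Nonempty α] [Fintype β]
    (p : Ω → ℝ) (A : Ω → α) (B : Ω → β) (E : Set Ω) : ℝ :=
  - Real.logb 2 (∑ b : β, cprEvt p {ω | B ω = b} E *
      ⨆ a : α, cprEvt p {ω | A ω = a} ({ω | B ω = b} ∩ E))

section helpers
variable {Ω : Type*} [Fintype Ω]

lemma prEvt_nonneg (p : Ω → ℝ) (hp : ∀ ω, 0 ≤ p ω) (E : Set Ω) : 0 ≤ prEvt p E := by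
  unfold prEvt
  apply Finset.sum_nonneg
  intro ω _
  split
  · exact hp ω
  · rfl

lemma prEvt_mono (p : Ω → ℝ) (hp : ∀ ω, 0 ≤ p ω) {E F : Set Ω} (h : E ⊆ F) :
    prEvt p E ≤ prEvt p F := by
  apply Finset.sum_le_sum
  intro ω _
  by_cases hω : ω ∈ E
  · simp [hω, h hω]
  · simp only [hω, if_false]
    split
    · exact hp ω
    · rfl

lemma cprEvt_nonneg (p : Ω → ℝ) (hp : ∀ ω, 0 ≤ p ω) (X F : Set Ω) :
    0 ≤ cprEvt p X F :=
  div_nonneg (prEvt_nonneg p hp _) (prEvt_nonneg p hp _)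

lemma cprEvt_mul (p : Ω → ℝ) (hp : ∀ ω, 0 ≤ p ω) (X F : Set Ω) :
    cprEvt p X F * prEvt p F = prEvt p (X ∩ F) := by
  unfold cprEvt
  by_cases h : prEvt p F = 0
  · rw [h, mul_zero]
    have h1 : prEvt p (X ∩ F) ≤ 0 := h ▸ prEvt_mono p hp Set.inter_subset_right
    linarith [prEvt_nonneg p hp (X ∩ F)]
  · field_simp

lemma sum_fiber {γ : Type*} [Fintype γ] (p : Ω → ℝ) (f : Ω → γ) (E : Set Ω) :
    ∑ c : γ, prEvt p ({ω | f ω = c} ∩ E) = prEvt p E := by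
  unfold prEvt
  rw [Finset.sum_comm]
  refine Finset.sum_congr rfl fun ω _ => ?_
  by_cases hω : ω ∈ E <;> simp [Set.mem_inter_iff, Set.mem_setOf_eq, hω]

end helpers

/-- Conditioning on an event `E` costs at most `log(1/Pr[E])` in average min-entropy:
`Pr[E]·2^{−H̃∞(A|B;E)} ≤ 2^{−H̃∞(A|B)}`, equivalently `H̃∞(A|B;E) ≥ H̃∞(A|B) − log(1/Pr[E])`. -/
theorem stmt12 {Ω α β : Type*} [Fintype Ω] [Fintype α] [Nonempty α] [Fintype β]
    (p : Ω → ℝ) (hp : ∀ ω, 0 ≤ p ω) (hsum : ∑ ω, p ω = 1)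
    (A : Ω → α) (B : Ω → β) (E : Set Ω) (hE : 0 < prEvt p E) :
    prEvt p E * (2 : ℝ) ^ (-(avgMinEntOn p A B E)) ≤ (2 : ℝ) ^ (-(avgMinEnt p A B)) ∧
    avgMinEnt p A B - Real.logb 2 ((prEvt p E)⁻¹) ≤ avgMinEntOn p A B E := by
  set S : ℝ := ∑ b : β, prEvt p {ω | B ω = b} * ⨆ a : α, cprEvt p {ω | A ω = a} {ω | B ω = b}
    with hS
  set T : ℝ := ∑ b : β, cprEvt p {ω | B ω = b} E *
      ⨆ a : α, cprEvt p {ω | A ω = a} ({ω | B ω = b} ∩ E) with hT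
  have hbdd : ∀ (F : Set Ω), BddAbove (Set.range fun a : α => cprEvt p {ω | A ω = a} F) :=
    fun F => (Set.finite_range _).bddAbove
  have hsup_nonneg : ∀ (F : Set Ω), 0 ≤ ⨆ a : α, cprEvt p {ω | A ω = a} F := by
    intro F
    obtain ⟨a0⟩ := ‹Nonempty α›
    exact le_trans (cprEvt_nonneg p hp _ _) (le_ciSup (hbdd F) a0)
  -- termwise inequality
  have hterm : ∀ b : β,
      prEvt p E * (cprEvt p {ω | B ω = b} E *
        ⨆ a : α, cprEvt p {ω | A ω = a} ({ω | B ω = b} ∩ E)) ≤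
      prEvt p {ω | B ω = b} * ⨆ a : α, cprEvt p {ω | A ω = a} {ω | B ω = b} := by
    intro b
    have hL : prEvt p E * (cprEvt p {ω | B ω = b} E *
        ⨆ a : α, cprEvt p {ω | A ω = a} ({ω | B ω = b} ∩ E)) =
        prEvt p ({ω | B ω = b} ∩ E) *
        ⨆ a : α, cprEvt p {ω | A ω = a} ({ω | B ω = b} ∩ E) := by
      rw [← cprEvt_mul p hp {ω | B ω = b} E]; ring
    rw [hL]
    obtain ⟨a0, ha0⟩ := Finite.exists_max (fun a : α => cprEvt p {ω | A ω = a} ({ω | B ω = b} ∩ E))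
    have hsup_eq : (⨆ a : α, cprEvt p {ω | A ω = a} ({ω | B ω = b} ∩ E)) =
        cprEvt p {ω | A ω = a0} ({ω | B ω = b} ∩ E) :=
      le_antisymm (ciSup_le ha0) (le_ciSup (hbdd _) a0)
    rw [hsup_eq, mul_comm, cprEvt_mul p hp]
    calc prEvt p ({ω | A ω = a0} ∩ ({ω | B ω = b} ∩ E))
        ≤ prEvt p ({ω | A ω = a0} ∩ {ω | B ω = b}) :=
          prEvt_mono p hp (by intro ω hω; exact ⟨hω.1, hω.2.1⟩)
      _ = cprEvt p {ω | A ω = a0} {ω | B ω = b} * prEvt p {ω | B ω = b} :=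
          (cprEvt_mul p hp _ _).symm
      _ ≤ (⨆ a : α, cprEvt p {ω | A ω = a} {ω | B ω = b}) * prEvt p {ω | B ω = b} :=
          mul_le_mul_of_nonneg_right (le_ciSup (hbdd _) a0) (prEvt_nonneg p hp _)
      _ = _ := mul_comm _ _
  have hmain : prEvt p E * T ≤ S := by
    rw [hT, Finset.mul_sum]
    exact Finset.sum_le_sum fun b _ => hterm b
  -- positivity of T
  have hT_pos : 0 < T := by
    have hsumB : ∑ b : β, prEvt p ({ω | B ω = b} ∩ E) = prEvt p E := sum_fiber p B E
    have : ∃ b : β, prEvt p ({ω | B ω = b} ∩ E) ≠ 0 := by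
      by_contra h
      push_neg at h
      rw [Finset.sum_congr rfl (fun b _ => h b), Finset.sum_const, smul_zero] at hsumB
      exact hE.ne' hsumB.symm
    obtain ⟨b0, hb0⟩ := this
    have hb0' : 0 < prEvt p ({ω | B ω = b0} ∩ E) :=
      lt_of_le_of_ne (prEvt_nonneg p hp _) (Ne.symm hb0)
    have hsumA : ∑ a : α, prEvt p ({ω | A ω = a} ∩ ({ω | B ω = b0} ∩ E)) =
        prEvt p ({ω | B ω = b0} ∩ E) := sum_fiber p A _
    have : ∃ a : α, prEvt p ({ω | A ω = a} ∩ ({ω | B ω = b0} ∩ E)) ≠ 0 := by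
      by_contra h
      push_neg at h
      rw [Finset.sum_congr rfl (fun a _ => h a), Finset.sum_const, smul_zero] at hsumA
      exact hb0'.ne' hsumA.symm
    obtain ⟨a0, ha0⟩ := this
    have ha0' : 0 < prEvt p ({ω | A ω = a0} ∩ ({ω | B ω = b0} ∩ E)) :=
      lt_of_le_of_ne (prEvt_nonneg p hp _) (Ne.symm ha0)
    have hcpr_pos : 0 < cprEvt p {ω | A ω = a0} ({ω | B ω = b0} ∩ E) :=
      div_pos ha0' hb0'
    have hsup_pos : 0 < ⨆ a : α, cprEvt p {ω | A ω = a} ({ω | B ω = b0} ∩ E) :=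
      lt_of_lt_of_le hcpr_pos (le_ciSup (hbdd _) a0)
    have hcprB_pos : 0 < cprEvt p {ω | B ω = b0} E := div_pos hb0' hE
    have hterm_pos : 0 < cprEvt p {ω | B ω = b0} E *
        ⨆ a : α, cprEvt p {ω | A ω = a} ({ω | B ω = b0} ∩ E) :=
      mul_pos hcprB_pos hsup_pos
    rw [hT]
    exact lt_of_lt_of_le hterm_pos (Finset.single_le_sum
      (f := fun b => cprEvt p {ω | B ω = b} E *
        ⨆ a : α, cprEvt p {ω | A ω = a} ({ω | B ω = b} ∩ E))
      (fun b _ => mul_nonneg (cprEvt_nonneg p hp _ _) (hsup_nonneg _))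
      (Finset.mem_univ b0))
  have hS_pos : 0 < S := lt_of_lt_of_le (mul_pos hE hT_pos) hmain
  have h2T : (2 : ℝ) ^ (-(avgMinEntOn p A B E)) = T := by
    rw [avgMinEntOn, neg_neg, ← hT, Real.rpow_logb (by norm_num) (by norm_num) hT_pos]
  have h2S : (2 : ℝ) ^ (-(avgMinEnt p A B)) = S := by
    rw [avgMinEnt, neg_neg, ← hS, Real.rpow_logb (by norm_num) (by norm_num) hS_pos]
  constructor
  · rw [h2T, h2S]; exact hmain
  · rw [avgMinEnt, avgMinEntOn, ← hS, ← hT, Real.logb_inv]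
    have hTle : T ≤ S / prEvt p E := (le_div_iff₀ hE).mpr (by linarith [hmain, mul_comm (prEvt p E) T])
    have : Real.logb 2 T ≤ Real.logb 2 (S / prEvt p E) :=
      Real.logb_le_logb_of_le (by norm_num) hT_pos hTle
    rw [Real.logb_div hS_pos.ne' hE.ne'] at this
    linarith
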